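/- arXiv:1308.6519 — 5 statements merged into one kernel-verified Lean document; each statement's English description precedes it below -/
import Mathlib

section
/- Let W be a convex body in ℝ^d with inradius r(W) > 0, and let k ∈ {0, …, d-1}. Then V_k(W)/V_d(W) ≤ (2^d - 1) / (κ_{d-k} · r(W)^{d-k}), where V_i denotes the i-th intrinsic volume and κ_n is the volume of the n-dimensional unit ball. -/
/-!
If the ball `closedBall c r` lies in the convex body `W`, then
`cthickening r W = W + closedBall 0 r ⊆ W + (W - c) = 2 • W - c`, so the parallel body at distance
`r` has volume at most `2^d V_d(W)`. In the Steiner expansion of that volume all terms are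
nonnegative; keeping only the terms `i = d` and `i = k` gives
`V_d(W) + κ_{d-k} r^{d-k} V_k(W) ≤ 2^d V_d(W)`.
-/

open MeasureTheory Metric Set

/-- Volume of the unit ball in `ℝ^n`. -/
noncomputable def unitBallVol (n : ℕ) : ℝ :=
  (volume (Metric.ball (0 : EuclideanSpace ℝ (Fin n)) 1)).toReal

open scoped Pointwise

lemma unitBallVol_zero : unitBallVol 0 = 1 := by
  simp [unitBallVol, volume_euclideanSpace_eq_dirac]

lemma unitBallVol_pos (n : ℕ) : 0 < unitBallVol n :=
  ENNReal.toReal_pos (measure_ball_pos _ _ one_pos).ne' measure_ball_lt_top.ne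

lemma Convex.add_self_eq_two_smul {E : Type*} [AddCommGroup E] [Module ℝ E] {s : Set E}
    (hs : Convex ℝ s) : s + s = (2 : ℝ) • s := by
  simpa [one_add_one_eq_two] using (hs.add_smul zero_le_one zero_le_one).symm

lemma IsCompact.cthickening_subset_neg_vadd_add_self {E : Type*} [SeminormedAddCommGroup E]
    {s : Set E} {c : E} {r : ℝ} (hs : IsCompact s) (hr : 0 ≤ r) (hc : closedBall c r ⊆ s) :
    cthickening r s ⊆ -c +ᵥ (s + s) := by
  rw [← hs.add_closedBall_zero hr]
  rintro _ ⟨x, hx, y, hy, rfl⟩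
  refine ⟨x + (y + c), add_mem_add hx (hc ?_), by simp only [vadd_eq_add]; abel⟩
  simpa [dist_eq_norm] using hy

lemma Convex.measure_cthickening_le_two_pow_mul {E : Type*} [NormedAddCommGroup E]
    [NormedSpace ℝ E] [MeasurableSpace E] [BorelSpace E] [FiniteDimensional ℝ E]
    (μ : Measure E) [μ.IsAddHaarMeasure] {s : Set E} {c : E} {r : ℝ} (hconv : Convex ℝ s)
    (hcomp : IsCompact s) (hr : 0 ≤ r) (hc : closedBall c r ⊆ s) :
    μ (Metric.cthickening r s) ≤ 2 ^ Module.finrank ℝ E * μ s :=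
  calc μ (Metric.cthickening r s) ≤ μ (-c +ᵥ (s + s)) :=
        measure_mono (hcomp.cthickening_subset_neg_vadd_add_self hr hc)
    _ = 2 ^ Module.finrank ℝ E * μ s := by
        rw [measure_vadd, hconv.add_self_eq_two_smul, Measure.addHaar_smul]
        norm_num

theorem stmt0_general (d k : ℕ) (hk : k < d)
    (W : Set (EuclideanSpace ℝ (Fin d)))
    (hWconv : Convex ℝ W) (hWcomp : IsCompact W)
    (V : ℕ → Set (EuclideanSpace ℝ (Fin d)) → ℝ)
    (hVd : ∀ A : Set (EuclideanSpace ℝ (Fin d)), V d A = (volume A).toReal)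
    (hSteiner : ∀ r : ℝ, 0 ≤ r →
      V d (Metric.cthickening r W) =
        ∑ i ∈ Finset.range (d + 1), unitBallVol (d - i) * r ^ (d - i) * V i W)
    (hVnonneg : ∀ i, i ≤ d → 0 ≤ V i W)
    (rW : ℝ) (hrW : 0 < rW)
    (hrin : ∃ c : EuclideanSpace ℝ (Fin d), Metric.closedBall c rW ⊆ W) :
    V k W / V d W ≤ ((2 : ℝ) ^ d - 1) / (unitBallVol (d - k) * rW ^ (d - k)) := by
  obtain ⟨c, hc⟩ := hrin
  have hW_ne_top : volume W ≠ ⊤ := hWcomp.measure_lt_top.ne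
  have hVd_pos : 0 < V d W := by
    rw [hVd]
    exact ENNReal.toReal_pos
      ((measure_closedBall_pos _ c hrW).trans_le (measure_mono hc)).ne' hW_ne_top
  have hupper : V d (cthickening rW W) ≤ 2 ^ d * V d W := by
    have h := hWconv.measure_cthickening_le_two_pow_mul volume hWcomp hrW.le hc
    rw [finrank_euclideanSpace_fin] at h
    rw [hVd, hVd, ← ENNReal.toReal_ofNat, ← ENNReal.toReal_pow, ← ENNReal.toReal_mul]
    exact ENNReal.toReal_mono (by finiteness) h
  have hlower : V d W + unitBallVol (d - k) * rW ^ (d - k) * V k W ≤ V d (cthickening rW W) := by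
    have hterm_nonneg : ∀ i ∈ Finset.range (d + 1),
        0 ≤ unitBallVol (d - i) * rW ^ (d - i) * V i W := fun i hi ↦ by
        have := unitBallVol_pos (d - i)
        have := hVnonneg i (Finset.mem_range_succ_iff.1 hi)
        positivity
    have h := Finset.add_le_sum hterm_nonneg (Finset.self_mem_range_succ d)
      (Finset.mem_range.2 (by omega : k < d + 1)) hk.ne'
    simpa [hSteiner rW hrW.le, unitBallVol_zero] using h
  have hκ : 0 < unitBallVol (d - k) * rW ^ (d - k) := by
    have := unitBallVol_pos (d - k)
    positivity
  rw [div_le_div_iff₀ hVd_pos hκ]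
  linarith

/-- For a convex body `W ⊆ ℝ^d` with inradius `rW > 0` and `k < d`,
`V_k(W)/V_d(W) ≤ (2^d - 1)/(κ_{d-k} rW^{d-k})`, where the intrinsic volumes `V i`
are characterized by the Steiner formula, are nonnegative, and `V d` is Lebesgue measure. -/
theorem stmt0 (d k : ℕ) (hk : k < d)
    (W : Set (EuclideanSpace ℝ (Fin d)))
    (hWconv : Convex ℝ W) (hWcomp : IsCompact W) (hWne : W.Nonempty)
    (V : ℕ → Set (EuclideanSpace ℝ (Fin d)) → ℝ)
    (hVd : ∀ A : Set (EuclideanSpace ℝ (Fin d)), V d A = (volume A).toReal)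
    (hSteiner : ∀ r : ℝ, 0 ≤ r →
      V d (Metric.cthickening r W) =
        ∑ i ∈ Finset.range (d + 1), unitBallVol (d - i) * r ^ (d - i) * V i W)
    (hVnonneg : ∀ i, i ≤ d → 0 ≤ V i W)
    (rW : ℝ) (hrW : 0 < rW)
    (hrin : ∃ c : EuclideanSpace ℝ (Fin d), Metric.closedBall c rW ⊆ W) :
    V k W / V d W ≤ ((2 : ℝ) ^ d - 1) / (unitBallVol (d - k) * rW ^ (d - k)) :=
  stmt0_general d k hk W hWconv hWcomp V hVd hSteiner hVnonneg rW hrW hrin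
end

section
/- Let W ⊂ ℝ^d be a convex body with inradius r(W) > 0 and let 0 < r_0/2 ≤ r(W). Then V_d(W) ≤ (2 r(W)/r_0) · V_d(∂⁻_{r_0/2} W), where ∂⁻_s W = {z ∈ W : dist(z, ∂W) ≤ s}. -/
open MeasureTheory Metric Set

/-- The inradius of a set `W`: the supremum of radii of closed balls contained in `W`. -/
noncomputable def inradius {d : ℕ} (W : Set (EuclideanSpace ℝ (Fin d))) : ℝ :=
  sSup {r : ℝ | ∃ c : EuclideanSpace ℝ (Fin d), Metric.closedBall c r ⊆ W}

/-!
Write `δ` for the distance to `∂W` and `m s` for the volume of `{δ > s}`. On a convex body `δ` is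
concave, with a supergradient `-v z` of norm one at every point `z`. The map `z ↦ z + c • v z` is
expanding (the superdifferential is monotone) and lowers `δ` by exactly `c`, so it carries the layer
`{s < δ ≤ s + h}` into `{s - c < δ ≤ s - c + h}`: deeper layers are smaller, which is the discrete
form of the monotonicity of `s ↦ ℋ^{d-1}(D_W(s))`. Hence `m` is convex on `[0, r(W)]`, and since
`m 0 = V(W)` and `m r(W) = 0`, we get `m t ≤ (1 - t / r(W)) V(W)`, i.e. `t V(W) ≤ r(W) V(∂⁻_t W)`.
-/

open scoped RealInnerProductSpace

section Expanding

theorem hausdorffMeasure_le_image_of_expanding {X Y : Type*} [EMetricSpace X] [MeasurableSpace X]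
    [BorelSpace X] [EMetricSpace Y] [MeasurableSpace Y] [BorelSpace Y] {f : X → Y} {s : Set X}
    {d : ℝ} (hd : 0 ≤ d) (hf : ∀ x ∈ s, ∀ y ∈ s, edist x y ≤ edist (f x) (f y)) :
    μH[d] s ≤ μH[d] (f '' s) := by
  have hA : AntilipschitzWith 1 (f ∘ ((↑) : s → X)) := fun x y => by
    rw [ENNReal.coe_one, one_mul]
    exact hf x x.2 y y.2
  calc μH[d] s = μH[d] (univ : Set s) := by
        rw [← Isometry.hausdorffMeasure_image (f := ((↑) : s → X)) isometry_subtype_coe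
          (Or.inl hd), image_univ, Subtype.range_coe]
    _ ≤ μH[d] ((f ∘ (↑)) '' (univ : Set s)) := by
        simpa using hA.le_hausdorffMeasure_image hd univ
    _ = μH[d] (f '' s) := by rw [image_univ, range_comp, Subtype.range_coe]

theorem addHaar_le_addHaar_image_of_expanding {E : Type*} [NormedAddCommGroup E]
    [NormedSpace ℝ E] [FiniteDimensional ℝ E] [MeasurableSpace E] [BorelSpace E]
    (μ : Measure E) [μ.IsAddHaarMeasure] {f : E → E} {s : Set E}
    (hf : ∀ x ∈ s, ∀ y ∈ s, dist x y ≤ dist (f x) (f y)) : μ s ≤ μ (f '' s) := by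
  rw [Measure.isAddLeftInvariant_eq_smul μ μH[Module.finrank ℝ E]]
  simp only [Measure.smul_apply, ENNReal.smul_def, smul_eq_mul]
  refine mul_le_mul_right ?_ _
  refine hausdorffMeasure_le_image_of_expanding (Nat.cast_nonneg _) fun x hx y hy => ?_
  simpa only [edist_dist] using ENNReal.ofReal_le_ofReal (hf x hx y hy)

end Expanding

section Frontier

variable {E : Type*} [NormedAddCommGroup E] [NormedSpace ℝ E] [ProperSpace E] {s : Set E} {x z : E}

theorem infDist_frontier_le_infDist_compl (hz : z ∈ s) :
    infDist z (frontier s) ≤ infDist z sᶜ := by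
  rcases sᶜ.eq_empty_or_nonempty with hs | hs
  · rw [compl_empty_iff.1 hs]
    simp
  obtain ⟨x, hx, hzx⟩ := isClosed_closure.exists_infDist_eq_dist (closure_nonempty_iff.2 hs) z
  rw [infDist_closure] at hzx
  refine hzx ▸ infDist_le_dist_of_mem ?_
  rw [frontier_eq_closure_inter_closure]
  refine ⟨closedBall_infDist_compl_subset_closure hz ?_, hx⟩
  rw [mem_closedBall, dist_comm, hzx]

theorem infDist_frontier_le_dist (hz : z ∈ s) (hx : x ∉ s) :
    infDist z (frontier s) ≤ dist z x :=
  (infDist_frontier_le_infDist_compl hz).trans (infDist_le_dist_of_mem hx)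

theorem closedBall_infDist_frontier_subset (hs : IsClosed s) (hz : z ∈ s) :
    closedBall z (infDist z (frontier s)) ⊆ s :=
  calc closedBall z (infDist z (frontier s)) ⊆ closedBall z (infDist z sᶜ) :=
        closedBall_subset_closedBall (infDist_frontier_le_infDist_compl hz)
    _ ⊆ closure s := closedBall_infDist_compl_subset_closure hz
    _ = s := hs.closure_eq

end Frontier

section Supergradient

variable {E : Type*} [NormedAddCommGroup E] [InnerProductSpace ℝ E] [FiniteDimensional ℝ E]
  {W : Set E}

theorem infDist_frontier_le_inner_of_subset_halfSpace {q v y : E} (hv : ‖v‖ = 1)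
    (hW : ∀ x ∈ W, ⟪x - q, v⟫ ≤ 0) (hy : y ∈ W) :
    infDist y (frontier W) ≤ ⟪q - y, v⟫ := by
  have hβ : 0 ≤ ⟪q - y, v⟫ := by
    rw [← neg_sub, inner_neg_left, neg_nonneg]
    exact hW y hy
  refine le_of_forall_pos_le_add fun ε hε => ?_
  have hout : y + (⟪q - y, v⟫ + ε) • v ∉ W := fun hmem => by
    have := hW _ hmem
    rw [show y + (⟪q - y, v⟫ + ε) • v - q = (⟪q - y, v⟫ + ε) • v - (q - y) by abel,
      inner_sub_left, real_inner_smul_left, real_inner_self_eq_norm_sq, hv] at this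
    linarith
  calc infDist y (frontier W) ≤ dist y (y + (⟪q - y, v⟫ + ε) • v) :=
        infDist_frontier_le_dist hy hout
    _ = ⟪q - y, v⟫ + ε := by
        rw [dist_self_add_right, norm_smul, hv, mul_one, Real.norm_of_nonneg (by linarith)]

theorem exists_unit_normal_of_mem_frontier (hW : Convex ℝ W) (hint : (interior W).Nonempty)
    {q : E} (hq : q ∈ frontier W) : ∃ v : E, ‖v‖ = 1 ∧ ∀ x ∈ W, ⟪x - q, v⟫ ≤ 0 := by
  obtain ⟨f, hf0, hf⟩ := geometric_hahn_banach_of_nonempty_interior_point hW hq.2 hint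
  set w := (InnerProductSpace.toDual ℝ E).symm f
  have hw : w ≠ 0 := by simpa [w] using hf0
  refine ⟨‖w‖⁻¹ • w, norm_smul_inv_norm hw, fun x hx => ?_⟩
  rw [real_inner_smul_right, real_inner_comm, InnerProductSpace.toDual_symm_apply, map_sub]
  exact mul_nonpos_of_nonneg_of_nonpos (by positivity) (sub_nonpos.2 (hf x hx))

theorem exists_unit_supergradient_infDist_frontier (hW : Convex ℝ W)
    (hint : (interior W).Nonempty) (hfr : (frontier W).Nonempty) (z : E) :
    ∃ v : E, ‖v‖ = 1 ∧ ∀ y ∈ W, infDist y (frontier W) ≤ infDist z (frontier W) + ⟪z - y, v⟫ := by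
  obtain ⟨q, hq, hzq⟩ := isClosed_frontier.exists_infDist_eq_dist hfr z
  obtain ⟨v, hv, hWv⟩ := exists_unit_normal_of_mem_frontier hW hint hq
  refine ⟨v, hv, fun y hy => ?_⟩
  calc infDist y (frontier W) ≤ ⟪q - y, v⟫ :=
        infDist_frontier_le_inner_of_subset_halfSpace hv hWv hy
    _ = ⟪q - z, v⟫ + ⟪z - y, v⟫ := by rw [← inner_add_left, sub_add_sub_cancel]
    _ ≤ ‖q - z‖ * ‖v‖ + ⟪z - y, v⟫ := by gcongr; exact real_inner_le_norm _ _
    _ = infDist z (frontier W) + ⟪z - y, v⟫ := by rw [hv, mul_one, hzq, dist_eq_norm']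

end Supergradient

theorem norm_le_norm_add_smul_of_inner_nonneg {E : Type*} [NormedAddCommGroup E]
    [InnerProductSpace ℝ E] {a b : E} {c : ℝ} (hab : 0 ≤ ⟪a, b⟫) (hc : 0 ≤ c) :
    ‖a‖ ≤ ‖a + c • b‖ := by
  refine le_of_sq_le_sq ?_ (norm_nonneg _)
  rw [norm_add_sq_real, real_inner_smul_right]
  nlinarith [sq_nonneg ‖c • b‖, mul_nonneg hc hab]

theorem mul_le_of_antitone_sub_succ {a : ℕ → ℝ} (ha : Antitone fun k => a k - a (k + 1))
    {j n : ℕ} (hjn : j ≤ n) : (n : ℝ) * a j ≤ (n - j) * a 0 + j * a n := by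
  have hleft : (j : ℝ) * (a j - a (j + 1)) ≤ a 0 - a j := by
    have := Finset.card_nsmul_le_sum (Finset.range j) (fun k => a k - a (k + 1))
      (a j - a (j + 1)) fun k hk => ha (Finset.mem_range.1 hk).le
    rwa [Finset.sum_range_sub', Finset.card_range, nsmul_eq_mul] at this
  have hright : a j - a n ≤ (n - j : ℝ) * (a j - a (j + 1)) := by
    have := Finset.sum_le_card_nsmul (Finset.range (n - j)) (fun k => a (j + k) - a (j + (k + 1)))
      (a j - a (j + 1)) fun k _ => ha (Nat.le_add_right j k)
    rwa [Finset.sum_range_sub' (fun k => a (j + k)), Finset.card_range, nsmul_eq_mul,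
      Nat.add_sub_cancel' hjn, add_zero, Nat.cast_sub hjn] at this
  have hj : (0 : ℝ) ≤ j := Nat.cast_nonneg j
  have hnj : (0 : ℝ) ≤ n - j := sub_nonneg.2 (Nat.cast_le.2 hjn)
  nlinarith [mul_le_mul_of_nonneg_left hleft hnj, mul_le_mul_of_nonneg_left hright hj]

theorem mul_le_of_antitoneOn_sub {m : ℝ → ℝ} (hm : Antitone m)
    (hD : ∀ h, 0 ≤ h → AntitoneOn (fun s => m s - m (s + h)) (Ici 0)) {r t : ℝ} (hmr : m r = 0)
    (ht : 0 < t) (htr : t ≤ r) : r * m t ≤ (r - t) * m 0 := by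
  have hr : 0 < r := ht.trans_le htr
  have hm0 : 0 ≤ m 0 := by simpa [hmr] using hm hr.le
  -- sampling `m` on the grid `(r / n) ℕ` costs at most `r * m 0 / n`
  have hgrid : ∀ n : ℕ, 0 < n → r * m t ≤ (r - t) * m 0 + r * m 0 / n := fun n hn => by
    have hn' : (0 : ℝ) < n := Nat.cast_pos.2 hn
    set h := r / n
    have hh : 0 < h := div_pos hr hn'
    have hnh : (n : ℝ) * h = r := mul_div_cancel₀ r hn'.ne'
    set j := ⌊t / h⌋₊
    have hjh : (j : ℝ) * h ≤ t := (le_div_iff₀ hh).1 (Nat.floor_le (div_pos ht hh).le)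
    have hjt : t / h - 1 < j := Nat.sub_one_lt_floor _
    have hjn : j ≤ n := Nat.floor_le_of_le ((div_le_iff₀ hh).2 (hnh ▸ htr))
    have hconv := mul_le_of_antitone_sub_succ (a := fun k : ℕ => m (k * h))
      (fun k k' hkk' => by
        simpa only [Nat.cast_succ, add_mul, one_mul] using
          hD h hh.le (by positivity : (0 : ℝ) ≤ k * h) (by positivity : (0 : ℝ) ≤ k' * h)
            (mul_le_mul_of_nonneg_right (Nat.cast_le.2 hkk') hh.le)) hjn
    simp only [Nat.cast_zero, zero_mul, hnh, hmr, mul_zero, add_zero] at hconv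
    have hjt' : t * n - r < r * j := by
      rw [div_sub_one hh.ne', div_lt_iff₀ hh] at hjt
      nlinarith
    have hmt : (n : ℝ) * m t ≤ (n - j) * m 0 :=
      (mul_le_mul_of_nonneg_left (hm hjh) hn'.le).trans hconv
    have key : (n : ℝ) * (r * m t) ≤ n * ((r - t) * m 0 + r * m 0 / n) := by
      rw [mul_add, mul_div_cancel₀ _ hn'.ne']
      nlinarith [mul_le_mul_of_nonneg_left hmt hr.le, mul_le_mul_of_nonneg_right hjt'.le hm0]
    exact le_of_mul_le_mul_left key hn'
  refine ge_of_tendsto ?_ ((Filter.eventually_gt_atTop 0).mono hgrid)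
  simpa using tendsto_const_nhds.add (tendsto_const_div_atTop_nhds_zero_nat (r * m 0))

theorem measureReal_sep_lt_sub_measureReal_sep_lt {α : Type*} [MeasurableSpace α]
    {μ : Measure α} {W : Set α} {f : α → ℝ} (hW : MeasurableSet W) (hf : Measurable f)
    (hμ : μ W ≠ ⊤) {a b : ℝ} (hab : a ≤ b) :
    μ.real {z ∈ W | a < f z} - μ.real {z ∈ W | b < f z} =
      μ.real {z ∈ W | a < f z ∧ f z ≤ b} := by
  have hsub : {z ∈ W | b < f z} ⊆ {z ∈ W | a < f z} := fun z hz => ⟨hz.1, hab.trans_lt hz.2⟩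
  rw [← measureReal_sdiff hsub (hW.inter (measurableSet_lt measurable_const hf))
    ((measure_mono (sep_subset _ _)).trans_lt hμ.lt_top).ne]
  congr 1
  ext z
  simp only [mem_sdiff, mem_ofPred_eq, not_and, not_lt]
  tauto

section Layers

variable {E : Type*} [NormedAddCommGroup E] [InnerProductSpace ℝ E] [FiniteDimensional ℝ E]
  [MeasurableSpace E] [BorelSpace E] (μ : Measure E) [μ.IsAddHaarMeasure] {W : Set E}

theorem measure_layer_le (hW : Convex ℝ W) (hWc : IsClosed W) (hint : (interior W).Nonempty)
    (hfr : (frontier W).Nonempty) {s' s h : ℝ} (hs' : 0 ≤ s') (hss : s' ≤ s) :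
    μ {z ∈ W | s < infDist z (frontier W) ∧ infDist z (frontier W) ≤ s + h} ≤
      μ {z ∈ W | s' < infDist z (frontier W) ∧ infDist z (frontier W) ≤ s' + h} := by
  set δ := fun z => infDist z (frontier W)
  choose v hv hsup using exists_unit_supergradient_infDist_frontier hW hint hfr
  set c := s - s'
  set T := fun z => z + c • v z
  have hTdist : ∀ z, dist z (T z) = c := fun z => by
    rw [dist_self_add_right, norm_smul, hv, mul_one, Real.norm_of_nonneg (by linarith)]
  have hTW : ∀ z ∈ W, c < δ z → T z ∈ W := fun z hz hcz =>
    closedBall_infDist_frontier_subset hWc hz (by rw [mem_closedBall, dist_comm, hTdist]; exact hcz.le)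
  have hTδ : ∀ z ∈ W, c < δ z → δ (T z) = δ z - c := fun z hz hcz => by
    refine le_antisymm ?_ ?_
    · have := hsup z (T z) (hTW z hz hcz)
      rwa [show z - T z = -(c • v z) by simp [T], inner_neg_left, real_inner_smul_left,
        real_inner_self_eq_norm_sq, hv, one_pow, mul_one, ← sub_eq_add_neg] at this
    · linarith [infDist_le_infDist_add_dist (s := frontier W) (x := z) (y := T z), hTdist z]
  have hexp : ∀ x ∈ W, ∀ y ∈ W, dist x y ≤ dist (T x) (T y) := fun x hx y hy => by
    have hmono : 0 ≤ ⟪x - y, v x - v y⟫ := by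
      have hxy := hsup x y hy
      have hyx := hsup y x hx
      rw [← neg_sub x y, inner_neg_left] at hyx
      rw [inner_sub_right]
      linarith
    rw [dist_eq_norm, dist_eq_norm, show T x - T y = (x - y) + c • (v x - v y) by
      simp only [T, smul_sub]; abel]
    exact norm_le_norm_add_smul_of_inner_nonneg hmono (by linarith)
  calc μ {z ∈ W | s < δ z ∧ δ z ≤ s + h}
      ≤ μ (T '' {z ∈ W | s < δ z ∧ δ z ≤ s + h}) :=
        addHaar_le_addHaar_image_of_expanding μ fun x hx y hy => hexp x hx.1 y hy.1
    _ ≤ μ {z ∈ W | s' < δ z ∧ δ z ≤ s' + h} := by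
        refine measure_mono ?_
        rintro _ ⟨z, ⟨hz, hsz, hzs⟩, rfl⟩
        have hcz : c < δ z := by linarith
        refine ⟨hTW z hz hcz, ?_, ?_⟩ <;> rw [hTδ z hz hcz] <;> linarith

theorem mul_measureReal_le_mul_measureReal_shell (hW : Convex ℝ W) (hWc : IsCompact W)
    (hint : (interior W).Nonempty) (hfr : (frontier W).Nonempty) {R t : ℝ}
    (hR : ∀ z ∈ W, infDist z (frontier W) ≤ R) (ht : 0 < t) (htR : t ≤ R) :
    t * μ.real W ≤ R * μ.real {z ∈ W | infDist z (frontier W) ≤ t} := by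
  set δ := fun z => infDist z (frontier W)
  set m := fun s => μ.real {z ∈ W | s < δ z}
  have hmeas : MeasurableSet {z ∈ W | t < δ z} :=
    hWc.isClosed.measurableSet.inter
      (measurableSet_lt measurable_const (continuous_infDist_pt _).measurable)
  have hfin : ∀ s, μ {z ∈ W | s < δ z} ≠ ⊤ := fun s =>
    (measure_mono (sep_subset _ _)).trans_lt hWc.measure_lt_top |>.ne
  have hm : Antitone m := fun a b hab =>
    measureReal_mono (fun z hz => ⟨hz.1, hab.trans_lt hz.2⟩) (hfin a)
  have hlayer : ∀ s h, 0 ≤ h →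
      m s - m (s + h) = μ.real {z ∈ W | s < δ z ∧ δ z ≤ s + h} := fun s h hh =>
    measureReal_sep_lt_sub_measureReal_sep_lt hWc.isClosed.measurableSet
      (continuous_infDist_pt _).measurable hWc.measure_lt_top.ne (le_add_of_nonneg_right hh)
  have hD : ∀ h, 0 ≤ h → AntitoneOn (fun s => m s - m (s + h)) (Ici 0) :=
    fun h hh s' hs' s _ hss => by
      simp only [hlayer s h hh, hlayer s' h hh]
      exact ENNReal.toReal_mono
        ((measure_mono (sep_subset _ _)).trans_lt hWc.measure_lt_top).ne
        (measure_layer_le μ hW hWc.isClosed hint hfr hs' hss)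
  have hmR : m R = 0 := by
    have : {z ∈ W | R < δ z} = ∅ := sep_eq_empty_iff_mem_false.2 fun z hz => (hR z hz).not_gt
    simp only [m, this, measureReal_empty]
  have hm0 : m 0 = μ.real W := by
    refine congrArg ENNReal.toReal <| measure_eq_measure_of_null_sdiff (sep_subset _ _) <|
      measure_mono_null (fun z hz => ?_) (hW.addHaar_frontier μ)
    have hz0 : δ z = 0 := le_antisymm (not_lt.1 fun h => hz.2 ⟨hz.1, h⟩) infDist_nonneg
    exact (isClosed_frontier.mem_iff_infDist_zero hfr).2 hz0
  have hshell : μ.real W = μ.real {z ∈ W | δ z ≤ t} + m t := by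
    have : {z ∈ W | δ z ≤ t} = W \ {z ∈ W | t < δ z} := by
      ext z
      simp only [mem_sdiff, mem_ofPred_eq, not_and, not_lt]
      tauto
    rw [this, measureReal_sdiff (sep_subset _ _) hmeas hWc.measure_lt_top.ne]
    ring
  have hconv := mul_le_of_antitoneOn_sub hm hD hmR ht htR
  rw [hm0] at hconv
  nlinarith

end Layers

section Inradius

variable {d : ℕ} {W : Set (EuclideanSpace ℝ (Fin d))}

theorem bddAbove_of_inradius_pos (hin : 0 < inradius W) :
    BddAbove {r : ℝ | ∃ c : EuclideanSpace ℝ (Fin d), closedBall c r ⊆ W} := by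
  by_contra h
  rw [inradius, Real.sSup_of_not_bddAbove h] at hin
  exact hin.false

theorem le_inradius (hin : 0 < inradius W) {c : EuclideanSpace ℝ (Fin d)} {ρ : ℝ}
    (hc : closedBall c ρ ⊆ W) : ρ ≤ inradius W :=
  le_csSup (bddAbove_of_inradius_pos hin) ⟨c, hc⟩

theorem ne_univ_of_inradius_pos (hin : 0 < inradius W) : W ≠ univ := by
  intro hW
  have := le_inradius hin (c := 0) (ρ := inradius W + 1) (hW ▸ subset_univ _)
  linarith

theorem interior_nonempty_of_inradius_pos (hin : 0 < inradius W) : (interior W).Nonempty := by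
  have hne : {r : ℝ | ∃ c : EuclideanSpace ℝ (Fin d), closedBall c r ⊆ W}.Nonempty :=
    ⟨-1, 0, by simp⟩
  obtain ⟨ρ, ⟨c, hc⟩, hρ⟩ := exists_lt_of_lt_csSup hne hin
  exact ⟨c, mem_interior.2 ⟨ball c ρ, ball_subset_closedBall.trans hc, isOpen_ball,
    mem_ball_self hρ⟩⟩

end Inradius

theorem stmt9_general (d : ℕ) (W : Set (EuclideanSpace ℝ (Fin d)))
    (hWconv : Convex ℝ W) (hWcomp : IsCompact W)
    (hin : 0 < inradius W)
    (r0 : ℝ) (hr0 : 0 < r0 / 2) (hr0in : r0 / 2 ≤ inradius W) :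
    (volume W).toReal ≤ (2 * inradius W / r0) *
      (volume {z ∈ W | Metric.infDist z (frontier W) ≤ r0 / 2}).toReal := by
  have hint := interior_nonempty_of_inradius_pos hin
  have hfr : (frontier W).Nonempty :=
    nonempty_frontier_iff.2 ⟨hint.mono interior_subset, ne_univ_of_inradius_pos hin⟩
  have key := mul_measureReal_le_mul_measureReal_shell volume hWconv hWcomp hint hfr
    (fun z hz => le_inradius hin (closedBall_infDist_frontier_subset hWcomp.isClosed hz)) hr0 hr0in
  rw [div_mul_eq_mul_div, le_div_iff₀ (by linarith)]
  simp only [measureReal_def] at key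
  linarith

/-- For a convex body `W ⊆ ℝ^d` with positive inradius and
`0 < r_0/2 ≤ r(W)`, one has `V_d(W) ≤ (2 r(W)/r_0) V_d(∂⁻_{r_0/2} W)`, where
`∂⁻_s W = {z ∈ W : dist(z, ∂W) ≤ s}`. -/
theorem stmt9 (d : ℕ) (W : Set (EuclideanSpace ℝ (Fin d)))
    (hWconv : Convex ℝ W) (hWcomp : IsCompact W) (hWne : W.Nonempty)
    (hin : 0 < inradius W)
    (r0 : ℝ) (hr0 : 0 < r0 / 2) (hr0in : r0 / 2 ≤ inradius W) :
    (volume W).toReal ≤ (2 * inradius W / r0) *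
      (volume {z ∈ W | Metric.infDist z (frontier W) ≤ r0 / 2}).toReal :=
  stmt9_general d W hWconv hWcomp hin r0 hr0 hr0in
end

section
/- Let Z be a stationary Boolean model in ℝ^d with E[V_d(Z_0)^2] < ∞. Then the asymptotic variance of the volume functional exists and equals σ_{d,d} = lim_{r(W)→∞} Var(V_d(Z ∩ W))/V_d(W) = (1 − p)² ∫_{ℝ^d} (e^{γ C_d(x)} − 1) dx, where the limit is along convex observation windows W whose inradius r(W) tends to infinity. -/
open MeasureTheory Metric Set Filter
open scoped ENNReal

variable {d : ℕ}

lemma img_eq_preimg (W : Set (EuclideanSpace ℝ (Fin d))) (x : EuclideanSpace ℝ (Fin d)) :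
    ((fun y => y + x) '' W) = (fun z => z - x) ⁻¹' W := by
  ext z
  simp [Set.mem_image, sub_eq_iff_eq_add, sub_eq_add_neg]

lemma vol_inter_lintegral {W : Set (EuclideanSpace ℝ (Fin d))} (hW : MeasurableSet W)
    (x : EuclideanSpace ℝ (Fin d)) :
    volume (W ∩ ((fun y => y + x) '' W)) =
      ∫⁻ y, W.indicator 1 y * W.indicator 1 (y - x) := by
  rw [img_eq_preimg,
    ← lintegral_indicator_one (hW.inter (hW.preimage (measurable_sub_const x)))]
  congr 1
  funext y
  by_cases h1 : y ∈ W <;> by_cases h2 : y - x ∈ W <;>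
    simp [Set.indicator, h1, h2, Set.mem_preimage]

lemma cw_measurable {W : Set (EuclideanSpace ℝ (Fin d))} (hW : MeasurableSet W) :
    Measurable (fun x => volume (W ∩ ((fun y => y + x) '' W))) := by
  simp_rw [fun x => vol_inter_lintegral hW x]
  apply Measurable.lintegral_prod_right'
    (f := fun q : EuclideanSpace ℝ (Fin d) × EuclideanSpace ℝ (Fin d) =>
      W.indicator 1 q.2 * W.indicator 1 (q.2 - q.1))
  exact ((measurable_one.indicator hW).comp measurable_snd).mul
    ((measurable_one.indicator hW).comp (measurable_snd.sub measurable_fst))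

lemma tonelli_sq {K : Set (EuclideanSpace ℝ (Fin d))} (hK : MeasurableSet K) :
    ∫⁻ x, volume (K ∩ ((fun y => y + x) '' K)) = volume K ^ 2 := by
  simp_rw [fun x => vol_inter_lintegral hK x]
  have hmeas : Measurable (fun q : EuclideanSpace ℝ (Fin d) × EuclideanSpace ℝ (Fin d) =>
      K.indicator (1 : EuclideanSpace ℝ (Fin d) → ENNReal) q.2 * K.indicator 1 (q.2 - q.1)) :=
    ((measurable_one.indicator hK).comp measurable_snd).mul
      ((measurable_one.indicator hK).comp (measurable_snd.sub measurable_fst))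
  rw [lintegral_lintegral_swap hmeas.aemeasurable]
  have hinner : ∀ y : EuclideanSpace ℝ (Fin d),
      ∫⁻ x, K.indicator 1 y * K.indicator 1 (y - x) = K.indicator 1 y * volume K := by
    intro y
    have hm2 : Measurable (fun x : EuclideanSpace ℝ (Fin d) =>
        K.indicator (1 : EuclideanSpace ℝ (Fin d) → ENNReal) (y - x)) :=
      (measurable_one.indicator hK).comp (measurable_const.sub measurable_id)
    rw [lintegral_const_mul _ hm2]
    congr 1
    have h1 : ∀ x : EuclideanSpace ℝ (Fin d),
        K.indicator (1 : EuclideanSpace ℝ (Fin d) → ENNReal) (y - x)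
        = ((fun x => y - x) ⁻¹' K).indicator (1 : EuclideanSpace ℝ (Fin d) → ENNReal) x := by
      intro x
      by_cases h : y - x ∈ K <;> simp [Set.indicator, h]
    simp_rw [h1]
    have hKs : MeasurableSet ((fun x : EuclideanSpace ℝ (Fin d) => y - x) ⁻¹' K) :=
      hK.preimage (measurable_const.sub measurable_id)
    rw [lintegral_indicator_one hKs]
    have h2 : (fun x : EuclideanSpace ℝ (Fin d) => y - x) ⁻¹' K
        = Neg.neg ⁻¹' ((fun x => y + x) ⁻¹' K) := by
      ext z; simp [sub_eq_add_neg]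
    rw [h2, Measure.measure_preimage_neg, measure_preimage_add]
  simp_rw [hinner]
  rw [lintegral_mul_const _ (measurable_one.indicator hK), lintegral_indicator_one hK, sq]

lemma exists_closedBall_of_lt_inradius {W : Set (EuclideanSpace ℝ (Fin d))} {r : ℝ}
    (h : r < sSup {r : ℝ | ∃ c : EuclideanSpace ℝ (Fin d), Metric.closedBall c r ⊆ W}) :
    ∃ c : EuclideanSpace ℝ (Fin d), Metric.closedBall c r ⊆ W := by
  set S := {r : ℝ | ∃ c : EuclideanSpace ℝ (Fin d), Metric.closedBall c r ⊆ W} with hS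
  have hne : S.Nonempty := ⟨-1, 0, by
    rw [Metric.closedBall_eq_empty.2 (by norm_num : (-1:ℝ) < 0)]
    exact Set.empty_subset _⟩
  by_cases hb : BddAbove S
  · obtain ⟨b, hbS, hrb⟩ := (lt_csSup_iff hb hne).1 h
    obtain ⟨c, hc⟩ := hbS
    exact ⟨c, (Metric.closedBall_subset_closedBall hrb.le).trans hc⟩
  · obtain ⟨b, hbS, hrb⟩ := not_bddAbove_iff.1 hb r
    obtain ⟨c, hc⟩ := hbS
    exact ⟨c, (Metric.closedBall_subset_closedBall hrb.le).trans hc⟩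

lemma geom_lower {W : Set (EuclideanSpace ℝ (Fin d))} (hconv : Convex ℝ W)
    {c x : EuclideanSpace ℝ (Fin d)} {r : ℝ} (hr : 0 < r)
    (hball : Metric.closedBall c r ⊆ W) (hx : ‖x‖ ≤ r) :
    ENNReal.ofReal ((1 - ‖x‖ / r) ^ d) * volume W ≤
      volume (W ∩ ((fun y => y + x) '' W)) := by
  have ht0 : 0 ≤ ‖x‖ / r := div_nonneg (norm_nonneg x) hr.le
  have ht1 : ‖x‖ / r ≤ 1 := (div_le_one hr).2 hx
  set t : ℝ := ‖x‖ / r with ht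
  set s : ℝ := 1 - t with hs
  have hst : s + t = 1 := by rw [hs]; ring
  have hs0 : 0 ≤ s := by rw [hs]; linarith
  have hcW : c ∈ W := hball (Metric.mem_closedBall_self hr.le)
  have hhom : ∀ w : EuclideanSpace ℝ (Fin d),
      (AffineMap.homothety c s) w = s • w + t • c := by
    intro w
    rw [AffineMap.homothety_apply, vsub_eq_sub, vadd_eq_add]
    have hts : t = 1 - s := by rw [hs]; ring
    rw [hts]
    module
  have key : ∀ w ∈ W, (AffineMap.homothety c s) w + x ∈ W ∩ ((fun y => y + x) '' W) := by
    intro w hw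
    have hmem1 : s • w + t • c ∈ W := hconv hw hcW hs0 ht0 hst
    rw [hhom w]
    refine ⟨?_, ⟨s • w + t • c, hmem1, rfl⟩⟩
    by_cases hx0 : x = 0
    · simpa [hx0] using hmem1
    · have hxn : 0 < ‖x‖ := norm_pos_iff.2 hx0
      have htpos : 0 < t := div_pos hxn hr
      have huW : c + t⁻¹ • x ∈ W := by
        apply hball
        rw [Metric.mem_closedBall, dist_eq_norm]
        have h3 : c + t⁻¹ • x - c = t⁻¹ • x := by abel
        rw [h3, norm_smul, Real.norm_eq_abs, abs_of_nonneg (inv_nonneg.2 ht0), ht,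
          inv_div, div_mul_cancel₀ _ hxn.ne']
      have heq : s • w + t • c + x = s • w + t • (c + t⁻¹ • x) := by
        rw [smul_add, smul_smul, mul_inv_cancel₀ htpos.ne', one_smul]
        abel
      rw [heq]
      exact hconv hw huW hs0 ht0 hst
  have himg : volume ((fun w => (AffineMap.homothety c s) w + x) '' W)
      = ENNReal.ofReal (s ^ d) * volume W := by
    have h1 : (fun w : EuclideanSpace ℝ (Fin d) => (AffineMap.homothety c s) w + x) '' W
        = (fun y => y + x) '' (AffineMap.homothety c s '' W) := by
      rw [Set.image_image]
    rw [h1]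
    simp only [Set.image_add_right, measure_preimage_add_right]
    rw [Measure.addHaar_image_homothety, finrank_euclideanSpace_fin,
      abs_of_nonneg (pow_nonneg hs0 d)]
  calc ENNReal.ofReal (s ^ d) * volume W
      = volume ((fun w => (AffineMap.homothety c s) w + x) '' W) := himg.symm
    _ ≤ volume (W ∩ ((fun y => y + x) '' W)) := by
        apply measure_mono
        rintro z ⟨w, hw, rfl⟩
        exact key w hw

lemma ofReal_integral_le {α : Type*} [MeasurableSpace α] (μ : Measure α) (f : α → ℝ) :
    ENNReal.ofReal (∫ a, f a ∂μ) ≤ ∫⁻ a, ENNReal.ofReal (f a) ∂μ := by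
  by_cases hf : Integrable f μ
  · calc ENNReal.ofReal (∫ a, f a ∂μ) ≤ ENNReal.ofReal (∫ a, max (f a) 0 ∂μ) := by
          apply ENNReal.ofReal_le_ofReal
          exact integral_mono hf (hf.sup (integrable_zero _ _ _)) (fun a => le_max_left _ _)
    _ = ∫⁻ a, ENNReal.ofReal (max (f a) 0) ∂μ :=
          ofReal_integral_eq_lintegral_ofReal (hf.sup (integrable_zero _ _ _))
            (Filter.Eventually.of_forall fun a => le_max_right _ _)
    _ = ∫⁻ a, ENNReal.ofReal (f a) ∂μ := by
          congr 1
          funext a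
          rcases le_total (f a) 0 with h | h
          · rw [max_eq_right h, ENNReal.ofReal_of_nonpos h, ENNReal.ofReal_zero]
          · rw [max_eq_left h]
  · rw [integral_undef hf]
    simp

/-- For a stationary Boolean model with `E[V_d(Z_0)²] < ∞`, the asymptotic
variance of the volume exists: `Var(V_d(Z ∩ W))/V_d(W) → (1−p)² ∫ (e^{γ C_d(x)} − 1) dx`
along convex windows whose inradius tends to infinity, using the exact variance formula
`Var(V_d(Z ∩ W)) = (1−p)² ∫ C_W(x)(e^{γ C_d(x)} − 1) dx`. -/
theorem stmt11 (d : ℕ) [MeasurableSpace (Set (EuclideanSpace ℝ (Fin d)))]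
    (γ : ℝ) (hγ : 0 < γ)
    (Q : Measure (Set (EuclideanSpace ℝ (Fin d)))) [IsProbabilityMeasure Q]
    (hQconv : ∀ᵐ K ∂Q, IsCompact K ∧ Convex ℝ K)
    (h1 : Integrable (fun K => (volume K).toReal) Q)
    (h2 : Integrable (fun K => ((volume K).toReal) ^ 2) Q)
    (hjm : AEMeasurable
      (fun q : Set (EuclideanSpace ℝ (Fin d)) × EuclideanSpace ℝ (Fin d) =>
        (volume (q.1 ∩ ((fun y => y + q.2) '' q.1))).toReal) (Q.prod volume))
    (vd : ℝ) (hvd : vd = ∫ K, (volume K).toReal ∂Q)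
    (Cd : EuclideanSpace ℝ (Fin d) → ℝ)
    (hCd : ∀ x, Cd x = ∫ K, (volume (K ∩ ((fun y => y + x) '' K))).toReal ∂Q)
    (hCdm : Measurable Cd)
    (p : ℝ) (hp : p = 1 - Real.exp (-(γ * vd)))
    (varX : Set (EuclideanSpace ℝ (Fin d)) → ℝ)
    (hvar : ∀ W : Set (EuclideanSpace ℝ (Fin d)),
      Convex ℝ W → IsCompact W → W.Nonempty →
      varX W = (1 - p) ^ 2 * ∫ x, (volume (W ∩ ((fun y => y + x) '' W))).toReal *
        (Real.exp (γ * Cd x) - 1) ∂volume) :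
    ∀ W : ℕ → Set (EuclideanSpace ℝ (Fin d)),
      (∀ m, Convex ℝ (W m) ∧ IsCompact (W m) ∧ (W m).Nonempty) →
      Tendsto (fun m => inradius (W m)) atTop atTop →
      Tendsto (fun m => varX (W m) / (volume (W m)).toReal) atTop
        (nhds ((1 - p) ^ 2 * ∫ x, (Real.exp (γ * Cd x) - 1) ∂volume)) := by
  intro W hW hr
  have hWconv : ∀ m, Convex ℝ (W m) := fun m => (hW m).1
  have hWcomp : ∀ m, IsCompact (W m) := fun m => (hW m).2.1
  have hWms : ∀ m, MeasurableSet (W m) := fun m => (hWcomp m).isClosed.measurableSet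
  have hWfin : ∀ m, volume (W m) < ⊤ := fun m => (hWcomp m).measure_lt_top
  have hCd0 : ∀ x, 0 ≤ Cd x := fun x =>
    (hCd x) ▸ integral_nonneg fun K => ENNReal.toReal_nonneg
  have hvd0 : 0 ≤ vd := hvd ▸ integral_nonneg fun K => ENNReal.toReal_nonneg
  have hfinQ : ∀ᵐ K ∂Q, volume K < ⊤ := hQconv.mono fun K hK => hK.1.measure_lt_top
  have hCdle : ∀ x, Cd x ≤ vd := by
    intro x
    rw [hCd, hvd]
    refine integral_mono_of_nonneg
      (Filter.Eventually.of_forall fun K => ENNReal.toReal_nonneg) h1 ?_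
    filter_upwards [hfinQ] with K hK
    exact ENNReal.toReal_mono hK.ne (measure_mono Set.inter_subset_left)
  set g : EuclideanSpace ℝ (Fin d) → ℝ := fun x => Real.exp (γ * Cd x) - 1 with hg
  have hg0 : ∀ x, 0 ≤ g x := by
    intro x
    simp only [hg, sub_nonneg]
    exact Real.one_le_exp (mul_nonneg hγ.le (hCd0 x))
  have hgle : ∀ x, g x ≤ (γ * Real.exp (γ * vd)) * Cd x := by
    intro x
    have h0 : 0 ≤ γ * Cd x := mul_nonneg hγ.le (hCd0 x)
    have h1' : Real.exp (γ * Cd x) - 1 ≤ (γ * Cd x) * Real.exp (γ * Cd x) := by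
      have h2' := Real.add_one_le_exp (-(γ * Cd x))
      have h3' := Real.exp_pos (γ * Cd x)
      have h4' : Real.exp (-(γ * Cd x)) * Real.exp (γ * Cd x) = 1 := by
        rw [← Real.exp_add]; simp
      nlinarith
    have h5' : Real.exp (γ * Cd x) ≤ Real.exp (γ * vd) :=
      Real.exp_le_exp.2 (mul_le_mul_of_nonneg_left (hCdle x) hγ.le)
    calc g x ≤ (γ * Cd x) * Real.exp (γ * Cd x) := h1'
      _ ≤ (γ * Cd x) * Real.exp (γ * vd) := mul_le_mul_of_nonneg_left h5' h0
      _ = (γ * Real.exp (γ * vd)) * Cd x := by ring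
  -- the ENNReal-valued covariogram on the product space
  set F : Set (EuclideanSpace ℝ (Fin d)) × EuclideanSpace ℝ (Fin d) → ℝ≥0∞ :=
    fun q => volume (q.1 ∩ ((fun y => y + q.2) '' q.1)) with hF
  have hFae : ∀ᵐ q ∂(Q.prod volume), F q ≠ ⊤ := by
    have hQ0 : Q {K | ¬ (IsCompact K ∧ Convex ℝ K)} = 0 := hQconv
    have hN : (Q.prod volume)
        ({K | ¬ (IsCompact K ∧ Convex ℝ K)} ×ˢ
          (Set.univ : Set (EuclideanSpace ℝ (Fin d)))) = 0 := by
      rw [Measure.prod_prod, hQ0, zero_mul]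
    rw [ae_iff]
    refine measure_mono_null ?_ hN
    intro q hq
    simp only [Set.mem_setOf_eq, not_not] at hq
    refine ⟨fun hcc => ?_, Set.mem_univ _⟩
    exact absurd hq (((measure_mono Set.inter_subset_left).trans_lt
      hcc.1.measure_lt_top).ne)
  have hFaemeas : AEMeasurable F (Q.prod volume) := by
    have h1'' : AEMeasurable (fun q => ENNReal.ofReal ((F q).toReal)) (Q.prod volume) :=
      ENNReal.measurable_ofReal.comp_aemeasurable hjm
    exact h1''.congr (hFae.mono fun q hq => ENNReal.ofReal_toReal hq)
  have hFub : ∫⁻ q, F q ∂(Q.prod volume) = ∫⁻ K, volume K ^ 2 ∂Q := by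
    rw [lintegral_prod F hFaemeas]
    apply lintegral_congr_ae
    filter_upwards [hQconv] with K hK
    exact tonelli_sq hK.1.isClosed.measurableSet
  have hsqfin : ∫⁻ K, volume K ^ 2 ∂Q < ⊤ := by
    have heq : ∀ᵐ K ∂Q, volume K ^ 2 = ENNReal.ofReal ((volume K).toReal ^ 2) := by
      filter_upwards [hfinQ] with K hK
      rw [← ENNReal.toReal_pow, ENNReal.ofReal_toReal (ENNReal.pow_ne_top hK.ne)]
    rw [lintegral_congr_ae heq]
    exact (hasFiniteIntegral_iff_ofReal
      (Filter.Eventually.of_forall fun K => sq_nonneg _)).1 h2.hasFiniteIntegral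
  have hCdint : Integrable Cd volume := by
    refine ⟨hCdm.aestronglyMeasurable, ?_⟩
    rw [hasFiniteIntegral_iff_ofReal (Filter.Eventually.of_forall hCd0)]
    calc ∫⁻ x, ENNReal.ofReal (Cd x)
        ≤ ∫⁻ x, ∫⁻ K, F (K, x) ∂Q := by
          apply lintegral_mono
          intro x
          dsimp only
          rw [hCd x]
          refine (ofReal_integral_le Q _).trans ?_
          exact lintegral_mono fun K => ENNReal.ofReal_toReal_le
      _ = ∫⁻ q, F q ∂(Q.prod volume) := (lintegral_prod_symm F hFaemeas).symm
      _ < ⊤ := by rw [hFub]; exact hsqfin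
  have hgmeas : Measurable g :=
    (Real.measurable_exp.comp (hCdm.const_mul γ)).sub measurable_const
  have hgint : Integrable g volume := by
    apply Integrable.mono' (hCdint.const_mul (γ * Real.exp (γ * vd)))
      hgmeas.aestronglyMeasurable
    refine Filter.Eventually.of_forall fun x => ?_
    rw [Real.norm_eq_abs, abs_of_nonneg (hg0 x)]
    exact hgle x
  -- normalized covariograms of the windows
  set h : ℕ → EuclideanSpace ℝ (Fin d) → ℝ := fun m x =>
    (volume (W m ∩ ((fun y => y + x) '' (W m)))).toReal / (volume (W m)).toReal with hh
  have hh0 : ∀ m x, 0 ≤ h m x := fun m x =>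
    div_nonneg ENNReal.toReal_nonneg ENNReal.toReal_nonneg
  have hh1 : ∀ m x, h m x ≤ 1 := fun m x =>
    div_le_one_of_le₀
      (ENNReal.toReal_mono (hWfin m).ne (measure_mono Set.inter_subset_left))
      ENNReal.toReal_nonneg
  -- pointwise convergence of the normalized covariograms to 1
  have hpt : ∀ x, Tendsto (fun m => h m x) atTop (nhds 1) := by
    intro x
    rw [Metric.tendsto_atTop]
    intro ε hε
    set R : ℝ := max (‖x‖ + 1) ((d : ℝ) * ‖x‖ / ε + 1) with hR
    have hR0 : 0 < R := lt_of_lt_of_le (by positivity) (le_max_left _ _)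
    have hRx : ‖x‖ ≤ R := le_trans (by linarith) (le_max_left _ _)
    have hRε : (d : ℝ) * ‖x‖ / R < ε := by
      have hd0 : (0:ℝ) ≤ (d : ℝ) * ‖x‖ := by positivity
      have h1' : (d : ℝ) * ‖x‖ / ε + 1 ≤ R := le_max_right _ _
      have h2' : (d : ℝ) * ‖x‖ / ε < R := by linarith
      rw [div_lt_iff₀ hR0]
      have h3' := (div_lt_iff₀ hε).1 h2'
      linarith
    obtain ⟨N, hN⟩ := eventually_atTop.1 (hr.eventually_ge_atTop (R + 1))
    refine ⟨N, fun m hm => ?_⟩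
    have hin : R < inradius (W m) := by linarith [hN m hm]
    rw [inradius] at hin
    obtain ⟨c, hc⟩ := exists_closedBall_of_lt_inradius hin
    have hVpos : 0 < (volume (W m)).toReal := by
      refine ENNReal.toReal_pos (ne_of_gt ?_) (hWfin m).ne
      exact lt_of_lt_of_le (measure_ball_pos volume c hR0)
        (measure_mono ((Metric.ball_subset_closedBall).trans hc))
    have hlow := geom_lower (hWconv m) hR0 hc hRx
    have hs0 : (0:ℝ) ≤ 1 - ‖x‖ / R := by
      have := (div_le_one hR0).2 hRx; linarith
    have hlow2 : (1 - ‖x‖ / R) ^ d * (volume (W m)).toReal ≤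
        (volume (W m ∩ ((fun y => y + x) '' (W m)))).toReal := by
      have h4 := ENNReal.toReal_mono
        ((measure_mono Set.inter_subset_left).trans_lt (hWfin m)).ne hlow
      rwa [ENNReal.toReal_mul, ENNReal.toReal_ofReal (pow_nonneg hs0 d)] at h4
    have hhm : (1 - ‖x‖ / R) ^ d ≤ h m x := by
      rw [hh]
      rw [le_div_iff₀ hVpos]
      exact hlow2
    have hbern : 1 - (d : ℝ) * (‖x‖ / R) ≤ (1 - ‖x‖ / R) ^ d := by
      have ht01 : 0 ≤ ‖x‖ / R := div_nonneg (norm_nonneg x) hR0.le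
      have hb := one_add_mul_le_pow (a := -(‖x‖ / R)) (by linarith : (-2:ℝ) ≤ -(‖x‖ / R)) d
      have e1 : (1 : ℝ) + -(‖x‖ / R) = 1 - ‖x‖ / R := by ring
      rw [e1] at hb
      linarith
    have hfinal : 1 - ε < h m x := by
      have e2 : (d : ℝ) * (‖x‖ / R) = (d : ℝ) * ‖x‖ / R := by ring
      have := hRε
      rw [← e2] at this
      linarith
    rw [Real.dist_eq, abs_of_nonpos (by linarith [hh1 m x])]
    linarith
  -- eventual positivity of the window volume
  have hVposev : ∀ᶠ m in atTop, 0 < (volume (W m)).toReal := by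
    filter_upwards [hr.eventually_ge_atTop 2] with m hm
    have hin : (1:ℝ) < inradius (W m) := by linarith
    rw [inradius] at hin
    obtain ⟨c, hc⟩ := exists_closedBall_of_lt_inradius hin
    refine ENNReal.toReal_pos (ne_of_gt ?_) (hWfin m).ne
    exact lt_of_lt_of_le (measure_ball_pos volume c one_pos)
      (measure_mono ((Metric.ball_subset_closedBall).trans hc))
  -- dominated convergence
  have hDCT : Tendsto (fun m => ∫ x, h m x * g x) atTop (nhds (∫ x, g x)) := by
    apply tendsto_integral_of_dominated_convergence g ?_ hgint ?_ ?_
    · intro m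
      exact (((cw_measurable (hWms m)).ennreal_toReal.div_const _).mul
        hgmeas).aestronglyMeasurable
    · intro m
      refine Filter.Eventually.of_forall fun x => ?_
      rw [Real.norm_eq_abs, abs_of_nonneg (mul_nonneg (hh0 m x) (hg0 x))]
      calc h m x * g x ≤ 1 * g x := mul_le_mul_of_nonneg_right (hh1 m x) (hg0 x)
        _ = g x := one_mul _
    · refine Filter.Eventually.of_forall fun x => ?_
      simpa using (hpt x).mul_const (g x)
  have hfinT : Tendsto (fun m => (1 - p) ^ 2 * ∫ x, h m x * g x) atTop
      (nhds ((1 - p) ^ 2 * ∫ x, g x)) := hDCT.const_mul _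
  refine Tendsto.congr' ?_ hfinT
  filter_upwards [hVposev] with m hV
  rw [hvar (W m) (hWconv m) (hWcomp m) (hW m).2.2]
  rw [mul_div_assoc]
  congr 1
  rw [← integral_div]
  apply integral_congr_ae
  refine Filter.Eventually.of_forall fun x => ?_
  rw [hh]
  ring
end

section
/- For integers i, j ≥ 1, the number of partitions σ of {1, …, 2i+2j} such that every block of σ meets each of the four index sets J_1 = {1,…,i}, J_2 = {i+1,…,2i}, J_3 = {2i+1,…,2i+j}, J_4 = {2i+j+1,…,2i+2j} in at most one element, and every block has at least two elements, is at most (i!)² (j!)² max{i+1, j+1}^{11} / ⌈max{i,j}/7⌉!. -/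
/-!
Colour each element of `Fin (2i+2j)` by the index set `J_u` containing it. The partitions to be
counted are those whose blocks are rainbow (injectively coloured) and have at least two elements;
the type of a block is its set of colours. Fix the number `k t` of blocks of each type `t`.
Labelling the blocks of type `t` by `Fin (k t)` maps every colour class `J_u` bijectively onto
the slots `{(t, r) | u ∈ t, r < k t}`, and these bijections determine both the partition and
the labelling. Hence (number of partitions with counts `k`) · ∏ₜ (k t)! ≤ ∏ᵤ |J_u|!. There are
at most `(max i j + 1) ^ 11` count vectors (11 types of size ≥ 2), and for the largest class
`J_u` one of the 7 types containing `u` has at least `⌈max i j / 7⌉` blocks.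
-/

open Finset
open scoped Nat

lemma Nat.card_equiv_le_factorial {α β : Type*} [Finite α] :
    Nat.card (α ≃ β) ≤ (Nat.card α)! := by
  rcases isEmpty_or_nonempty (α ≃ β) with h | ⟨⟨e⟩⟩
  · simp
  · rw [← Nat.card_perm]
    exact (Nat.card_congr ((Equiv.refl α).equivCongr e.symm)).le

lemma Set.injOn_iff_card_filter_le_one {X C : Type*} [DecidableEq C] (c : X → C) (A : Finset X) :
    Set.InjOn c A ↔ ∀ u, #{x ∈ A | c x = u} ≤ 1 := by
  simp only [Finset.card_le_one, mem_filter]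
  exact ⟨fun h u x hx y hy => h hx.1 hy.1 (hx.2.trans hy.2.symm),
    fun h x hx y hy hxy => h (c x) x ⟨hx, rfl⟩ y ⟨hy, hxy.symm⟩⟩

namespace Finpartition

variable {X : Type*} [DecidableEq X] {s : Finset X}

lemma ext_of_part_eq_part_iff {σ σ' : Finpartition s}
    (h : ∀ x ∈ s, ∀ y ∈ s, σ.part x = σ.part y ↔ σ'.part x = σ'.part y) : σ = σ' := by
  have hpart : ∀ x ∈ s, σ.part x = σ'.part x := fun x hx => by
    ext y
    by_cases hy : y ∈ s
    · rw [σ.mem_part_iff_part_eq_part hy hx, σ'.mem_part_iff_part_eq_part hy hx, h y hy x hx]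
    · exact iff_of_false (fun h' => hy (σ.part_subset x h')) (fun h' => hy (σ'.part_subset x h'))
  have key : ∀ {σ σ' : Finpartition s}, (∀ x ∈ s, σ.part x = σ'.part x) →
      σ.parts ⊆ σ'.parts := fun {σ σ'} hpart A hA => by
    obtain ⟨x, hx⟩ := σ.nonempty_of_mem_parts hA
    have hxs := σ.le hA hx
    rw [← σ.part_eq_of_mem hA hx, hpart x hxs]
    exact σ'.part_mem.2 hxs
  exact Finpartition.ext (subset_antisymm (key hpart) (key fun x hx => (hpart x hx).symm))

variable [Fintype X] {C : Type*} [DecidableEq C] (c : X → C)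

def IsRainbow (σ : Finpartition (univ : Finset X)) : Prop := ∀ A ∈ σ.parts, Set.InjOn c A

def typeCount (σ : Finpartition (univ : Finset X)) (t : Finset C) : ℕ :=
  #{A ∈ σ.parts | A.image c = t}

variable {c} {σ : Finpartition (univ : Finset X)}

lemma typeCount_eq_zero (hσ : σ.IsRainbow c) {m : ℕ} (hm : ∀ A ∈ σ.parts, m ≤ #A)
    {t : Finset C} (ht : #t < m) : σ.typeCount c t = 0 := by
  rw [typeCount, card_eq_zero, filter_eq_empty_iff]
  rintro A hA rfl
  rw [card_image_of_injOn (hσ A hA)] at ht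
  exact (hm A hA).not_gt ht

lemma card_parts_filter_mem_image (hσ : σ.IsRainbow c) (u : C) :
    #{A ∈ σ.parts | u ∈ A.image c} = #{x | c x = u} := by
  symm
  refine card_bij (fun x _ => σ.part x) (fun x hx => ?_) (fun x hx y hy hxy => ?_) fun A hA => ?_
  · simp only [mem_filter, mem_univ, true_and] at hx ⊢
    exact ⟨σ.part_mem.2 (mem_univ x), hx ▸ mem_image_of_mem c (σ.mem_part (mem_univ x))⟩
  · simp only [mem_filter, mem_univ, true_and] at hx hy
    refine hσ _ (σ.part_mem.2 (mem_univ x)) (σ.mem_part (mem_univ x)) ?_ (hx.trans hy.symm)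
    rw [hxy]; exact σ.mem_part (mem_univ y)
  · simp only [mem_filter, mem_image, mem_univ, true_and] at hA ⊢
    obtain ⟨hA, x, hx, rfl⟩ := hA
    exact ⟨x, rfl, σ.part_eq_of_mem hA hx⟩

section Labelling

variable {k : Finset C → ℕ}

noncomputable def blockRank (hk : σ.typeCount c = k) (t : Finset C) :
    {A // A ∈ ({A ∈ σ.parts | A.image c = t} : Finset _)} ≃ Fin (k t) :=
  equivFinOfCardEq (congrFun hk t)

lemma part_mem_filter_image_eq (x : X) :
    σ.part x ∈ ({A ∈ σ.parts | A.image c = (σ.part x).image c} : Finset _) :=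
  mem_filter.2 ⟨σ.part_mem.2 (mem_univ x), rfl⟩

noncomputable def blockLabel (hk : σ.typeCount c = k) (π : ∀ t, Equiv.Perm (Fin (k t)))
    (x : X) : ℕ :=
  π _ (blockRank hk _ ⟨σ.part x, part_mem_filter_image_eq x⟩)

variable (hk : σ.typeCount c = k) (π : ∀ t, Equiv.Perm (Fin (k t)))

lemma blockLabel_eq {t : Finset C} {A : Finset X}
    (hA : A ∈ ({A ∈ σ.parts | A.image c = t} : Finset _)) {x : X} (hx : x ∈ A) :
    blockLabel hk π x = π t (blockRank hk t ⟨A, hA⟩) := by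
  obtain rfl := σ.part_eq_of_mem (mem_filter.1 hA).1 hx
  obtain rfl := (mem_filter.1 hA).2
  rfl

lemma blockLabel_lt (x : X) : blockLabel hk π x < k ((σ.part x).image c) :=
  Fin.isLt _

noncomputable def slot (x : X) : Finset C × ℕ := ((σ.part x).image c, blockLabel hk π x)

lemma slot_eq_slot_iff {x y : X} : slot hk π x = slot hk π y ↔ σ.part x = σ.part y := by
  unfold slot
  constructor
  · rintro h
    obtain ⟨ht, hl⟩ := Prod.ext_iff.1 h
    have hy : σ.part y ∈ ({A ∈ σ.parts | A.image c = (σ.part x).image c} : Finset _) :=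
      mem_filter.2 ⟨σ.part_mem.2 (mem_univ y), ht.symm⟩
    rw [blockLabel_eq hk π (part_mem_filter_image_eq x) (σ.mem_part (mem_univ x)),
      blockLabel_eq hk π hy (σ.mem_part (mem_univ y))] at hl
    simpa using (blockRank hk _).injective ((π _).injective (Fin.ext hl))
  · intro h
    rw [blockLabel_eq hk π (part_mem_filter_image_eq y) (h ▸ σ.mem_part (mem_univ x)), h]
    rfl

noncomputable def slotEquiv (hσ : σ.IsRainbow c) (u : C) :
    {x // c x = u} ≃ {p : Finset C × ℕ // u ∈ p.1 ∧ p.2 < k p.1} :=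
  Equiv.ofBijective
    (fun x => ⟨slot hk π x,
      mem_image.2 ⟨x, σ.mem_part (mem_univ _), x.2⟩, blockLabel_lt hk π x⟩)
    ⟨fun x y hxy => Subtype.ext <| by
      have hpart := (slot_eq_slot_iff hk π).1 (congrArg Subtype.val hxy)
      exact hσ _ (σ.part_mem.2 (mem_univ _)) (σ.mem_part (mem_univ _))
        (hpart ▸ σ.mem_part (mem_univ _)) (x.2.trans y.2.symm),
    fun ⟨(t, r), hu, hr⟩ => by
      set A := (blockRank hk t).symm ((π t).symm ⟨r, hr⟩)
      obtain ⟨hA, hAt⟩ := mem_filter.1 A.2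
      obtain ⟨x, hx, rfl⟩ := mem_image.1 (hAt ▸ hu)
      refine ⟨⟨x, rfl⟩, Subtype.ext (Prod.ext ?_ ?_)⟩
      · simp only [slot, σ.part_eq_of_mem hA hx, hAt]
      · simp [slot, blockLabel_eq hk π A.2 hx, A]⟩

lemma slotEquiv_injective {k : Finset C → ℕ} :
    Function.Injective fun p : {σ : Finpartition (univ : Finset X) //
        σ.IsRainbow c ∧ σ.typeCount c = k} × (∀ t, Equiv.Perm (Fin (k t))) =>
      fun u => slotEquiv p.1.2.2 p.2 p.1.2.1 u := by
  rintro ⟨⟨σ, hσ, hk⟩, π⟩ ⟨⟨σ', hσ', hk'⟩, π'⟩ h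
  have hslot : ∀ x, slot hk π x = slot hk' π' x := fun x =>
    congrArg Subtype.val (Equiv.congr_fun (congrFun h (c x)) ⟨x, rfl⟩)
  obtain rfl : σ = σ' := ext_of_part_eq_part_iff fun x _ y _ => by
    rw [← slot_eq_slot_iff hk π, ← slot_eq_slot_iff hk' π', hslot, hslot]
  refine Prod.ext rfl (funext fun t => Equiv.ext fun r => Fin.ext ?_)
  set A := (blockRank hk t).symm r
  obtain ⟨x, hx⟩ := σ.nonempty_of_mem_parts (mem_filter.1 A.2).1
  have := congrArg Prod.snd (hslot x)
  simpa [slot, blockLabel_eq hk π A.2 hx, blockLabel_eq hk' π' A.2 hx, A] using this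

end Labelling

variable [Fintype C]

lemma sum_typeCount (hσ : σ.IsRainbow c) (u : C) :
    ∑ t with u ∈ t, σ.typeCount c t = #{x | c x = u} := by
  rw [← card_parts_filter_mem_image hσ u,
    card_eq_sum_card_fiberwise (f := image c) (t := {t | u ∈ t}) fun A hA => by
      simpa using (mem_filter.1 hA).2]
  refine sum_congr rfl fun t ht => ?_
  rw [typeCount, filter_filter]
  refine congrArg card (filter_congr fun A _ => ?_)
  simp only [mem_filter, mem_univ, true_and] at ht
  exact ⟨fun h => ⟨h ▸ ht, h⟩, And.right⟩

lemma typeCount_le_card (hσ : σ.IsRainbow c) {u : C} {t : Finset C} (hu : u ∈ t) :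
    σ.typeCount c t ≤ #{x | c x = u} :=
  sum_typeCount hσ u ▸ single_le_sum (fun _ _ => Nat.zero_le _) (by simpa using hu)

lemma exists_card_le_mul_typeCount (hσ : σ.IsRainbow c) (hm : ∀ A ∈ σ.parts, 2 ≤ #A) (u : C) :
    ∃ t, #{x | c x = u} ≤ #{t : Finset C | u ∈ t ∧ 2 ≤ #t} * σ.typeCount c t := by
  set F : Finset (Finset C) := {t | u ∈ t ∧ 2 ≤ #t}
  have hsum : ∑ t ∈ F, σ.typeCount c t = #{x | c x = u} := by
    rw [← sum_typeCount hσ u]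
    refine sum_subset (fun t ht => by simp_all [F]) fun t ht htF => ?_
    simp only [F, mem_filter, mem_univ, true_and, not_and, not_le] at ht htF
    exact typeCount_eq_zero hσ hm (htF ht)
  rcases F.eq_empty_or_nonempty with hF | hF
  · rw [hF, sum_empty] at hsum
    exact ⟨∅, by omega⟩
  · obtain ⟨t, -, ht⟩ := exists_le_of_sum_le hF (f := fun _ => #{x | c x = u})
      (g := fun t => #F * σ.typeCount c t) (by rw [sum_const, ← mul_sum, hsum, smul_eq_mul])
    exact ⟨t, ht⟩

theorem card_typeCount_eq_mul_prod_factorial_le (k : Finset C → ℕ) :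
    Nat.card {σ : Finpartition (univ : Finset X) // σ.IsRainbow c ∧ σ.typeCount c = k} *
      ∏ t, (k t)! ≤ ∏ u, (Nat.card {x // c x = u})! := by
  calc _ = Nat.card ({σ : Finpartition (univ : Finset X) // σ.IsRainbow c ∧ σ.typeCount c = k} ×
        ∀ t, Equiv.Perm (Fin (k t))) := by
        simp [Nat.card_prod, Fintype.card_perm]
    _ ≤ Nat.card (∀ u, {x // c x = u} ≃ {p : Finset C × ℕ // u ∈ p.1 ∧ p.2 < k p.1}) :=
        Nat.card_le_card_of_injective _ slotEquiv_injective
    _ = ∏ u, Nat.card ({x // c x = u} ≃ {p : Finset C × ℕ // u ∈ p.1 ∧ p.2 < k p.1}) :=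
        Nat.card_pi
    _ ≤ _ := prod_le_prod' fun u _ => Nat.card_equiv_le_factorial

theorem card_mul_factorial_le (P : Finpartition (univ : Finset X) → Prop)
    (K : Finset (Finset C → ℕ)) (d : ℕ)
    (hP : ∀ σ, P σ → σ.IsRainbow c ∧ σ.typeCount c ∈ K ∧ ∃ t, d ≤ σ.typeCount c t) :
    Nat.card {σ // P σ} * d ! ≤ #K * ∏ u, (Nat.card {x // c x = u})! := by
  classical
  have hfiber : ∀ k ∈ K, #{σ | P σ ∧ σ.typeCount c = k} * d ! ≤
      ∏ u, (Nat.card {x // c x = u})! := by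
    intro k _
    rcases (filter (fun σ => P σ ∧ σ.typeCount c = k) univ).eq_empty_or_nonempty with h | ⟨σ, hσ⟩
    · simp [h]
    obtain ⟨hPσ, rfl⟩ := (mem_filter.1 hσ).2
    obtain ⟨-, -, t, ht⟩ := hP σ hPσ
    refine le_trans (Nat.mul_le_mul ?_ ?_) (card_typeCount_eq_mul_prod_factorial_le (σ.typeCount c))
    · rw [Nat.card_eq_fintype_card, Fintype.card_subtype]
      exact card_le_card (monotone_filter_right _ fun τ _ hτ => ⟨(hP τ hτ.1).1, hτ.2⟩)
    · exact (Nat.factorial_le ht).trans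
        (single_le_prod' (f := fun t => (σ.typeCount c t)!) (fun _ _ => Nat.factorial_pos _)
          (mem_univ t))
  calc Nat.card {σ // P σ} * d ! = ∑ k ∈ K, #{σ | P σ ∧ σ.typeCount c = k} * d ! := by
        rw [Nat.card_eq_fintype_card, Fintype.card_subtype,
          card_eq_sum_card_fiberwise (f := typeCount c) (t := K)
            fun σ hσ => (hP σ (mem_filter.1 hσ).2).2.1, sum_mul]
        simp only [filter_filter]
    _ ≤ ∑ k ∈ K, ∏ u, (Nat.card {x // c x = u})! := sum_le_sum hfiber
    _ = _ := by rw [sum_const, smul_eq_mul]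

theorem card_mul_factorial_le_of_two_le_card (s : ℕ) (hs : ∀ u, #{x | c x = u} ≤ s) (u : C)
    (d : ℕ) (hd : ∀ m, #{x | c x = u} ≤ #{t : Finset C | u ∈ t ∧ 2 ≤ #t} * m → d ≤ m) :
    Nat.card {σ : Finpartition (univ : Finset X) // σ.IsRainbow c ∧ ∀ A ∈ σ.parts, 2 ≤ #A} *
        d ! ≤ (s + 1) ^ #{t : Finset C | 2 ≤ #t} * ∏ u, (Nat.card {x // c x = u})! := by
  set K := Fintype.piFinset fun t : Finset C => if 2 ≤ #t then range (s + 1) else {0}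
  have hK : #K = (s + 1) ^ #{t : Finset C | 2 ≤ #t} := by
    simp only [K, Fintype.card_piFinset, apply_ite card, card_range, card_singleton]
    rw [prod_ite, prod_const, prod_const_one, mul_one]
  rw [← hK]
  refine card_mul_factorial_le _ K d fun σ ⟨hσ, hm⟩ => ⟨hσ, ?_, ?_⟩
  · refine Fintype.mem_piFinset.2 fun t => ?_
    split_ifs with ht
    · obtain ⟨v, hv⟩ := card_pos.1 (by omega : 0 < #t)
      exact mem_range.2 (Nat.lt_succ_of_le ((typeCount_le_card hσ hv).trans (hs v)))
    · exact mem_singleton.2 (typeCount_eq_zero hσ hm (not_le.1 ht))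
  · obtain ⟨t, ht⟩ := exists_card_le_mul_typeCount hσ hm u
    exact ⟨t, hd _ ht⟩

end Finpartition

lemma Fin.card_filter_le_val_lt {n l r : ℕ} (h : r ≤ n) :
    #{x : Fin n | l ≤ (x : ℕ) ∧ (x : ℕ) < r} = r - l := by
  rw [← Nat.card_Ico, ← card_map Fin.valEmbedding]
  congr 1
  ext a
  simp only [mem_map, mem_filter, mem_univ, true_and, Fin.valEmbedding_apply, mem_Ico]
  exact ⟨by rintro ⟨x, hx, rfl⟩; exact hx, fun ha => ⟨⟨a, by omega⟩, ha, rfl⟩⟩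

/-- `J_(u+1)` of the statement is the colour class `segmentIndex i j ⁻¹' {u}`. -/
def segmentIndex (i j : ℕ) (x : Fin (2 * i + 2 * j)) : Fin 4 :=
  if (x : ℕ) < i then 0 else if (x : ℕ) < 2 * i then 1 else if (x : ℕ) < 2 * i + j then 2 else 3

lemma segmentIndex_eq_iff (i j : ℕ) (x : Fin (2 * i + 2 * j)) (u : Fin 4) :
    segmentIndex i j x = u ↔
      ![0, i, 2 * i, 2 * i + j] u ≤ (x : ℕ) ∧
        (x : ℕ) < ![i, 2 * i, 2 * i + j, 2 * i + 2 * j] u := by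
  have := x.isLt
  unfold segmentIndex
  fin_cases u <;> split_ifs <;> simp <;> omega

lemma card_segmentIndex_eq (i j : ℕ) (u : Fin 4) :
    #{x | segmentIndex i j x = u} = ![i, i, j, j] u := by
  rw [filter_congr fun x _ => segmentIndex_eq_iff i j x u, Fin.card_filter_le_val_lt]
  all_goals fin_cases u <;> simp <;> omega

lemma exists_card_segmentIndex_eq_max (i j : ℕ) :
    ∃ u, #{x | segmentIndex i j x = u} = max i j := by
  rcases le_total j i with h | h
  · exact ⟨0, by simp [card_segmentIndex_eq, h]⟩
  · exact ⟨2, by simp [card_segmentIndex_eq, h]⟩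

lemma prod_factorial_card_segmentIndex (i j : ℕ) :
    ∏ u, (Nat.card {x // segmentIndex i j x = u})! = i ! ^ 2 * j ! ^ 2 := by
  simp only [Nat.card_eq_fintype_card, Fintype.card_subtype, card_segmentIndex_eq,
    Fin.prod_univ_four]
  simp
  ring

lemma card_two_le_card_finset_fin_four : #{t : Finset (Fin 4) | 2 ≤ #t} = 11 := by decide

lemma card_mem_two_le_card_finset_fin_four (u : Fin 4) :
    #{t : Finset (Fin 4) | u ∈ t ∧ 2 ≤ #t} = 7 := by
  fin_cases u <;> decide

lemma natCeil_max_div_seven_le {i j m : ℕ} (h : max i j ≤ 7 * m) :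
    ⌈(max i j : ℝ) / 7⌉₊ ≤ m := by
  rw [Nat.ceil_le, div_le_iff₀ (by norm_num)]
  exact_mod_cast (by omega : max i j ≤ m * 7)

lemma isRainbow_segmentIndex_and_two_le_card_iff (i j : ℕ)
    (σ : Finpartition (univ : Finset (Fin (2 * i + 2 * j)))) :
    (σ.IsRainbow (segmentIndex i j) ∧ ∀ A ∈ σ.parts, 2 ≤ #A) ↔
      ∀ A ∈ σ.parts, 2 ≤ A.card ∧
        (A ∩ Finset.univ.filter (fun a : Fin (2 * i + 2 * j) => (a : ℕ) < i)).card ≤ 1 ∧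
        (A ∩ Finset.univ.filter
          (fun a : Fin (2 * i + 2 * j) => i ≤ (a : ℕ) ∧ (a : ℕ) < 2 * i)).card ≤ 1 ∧
        (A ∩ Finset.univ.filter
          (fun a : Fin (2 * i + 2 * j) => 2 * i ≤ (a : ℕ) ∧ (a : ℕ) < 2 * i + j)).card ≤ 1 ∧
        (A ∩ Finset.univ.filter
          (fun a : Fin (2 * i + 2 * j) => 2 * i + j ≤ (a : ℕ))).card ≤ 1 := by
  rw [Finpartition.IsRainbow, ← forall₂_and]
  refine forall₂_congr fun A _ => ?_
  rw [Set.injOn_iff_card_filter_le_one, and_comm]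
  simp only [segmentIndex_eq_iff, Fin.forall_fin_succ, Fin.isValue, Matrix.cons_val_zero,
    Matrix.cons_val_succ, Matrix.cons_val_fin_one, zero_le, true_and, Fin.is_lt, and_true,
    forall_const, inter_filter, inter_univ]
  congr!

theorem stmt13_general (i j : ℕ) :
    (Nat.card {σ : Finpartition (Finset.univ : Finset (Fin (2 * i + 2 * j))) //
      ∀ A ∈ σ.parts, 2 ≤ A.card ∧
        (A ∩ Finset.univ.filter (fun a : Fin (2 * i + 2 * j) => (a : ℕ) < i)).card ≤ 1 ∧
        (A ∩ Finset.univ.filter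
          (fun a : Fin (2 * i + 2 * j) => i ≤ (a : ℕ) ∧ (a : ℕ) < 2 * i)).card ≤ 1 ∧
        (A ∩ Finset.univ.filter
          (fun a : Fin (2 * i + 2 * j) => 2 * i ≤ (a : ℕ) ∧ (a : ℕ) < 2 * i + j)).card ≤ 1 ∧
        (A ∩ Finset.univ.filter
          (fun a : Fin (2 * i + 2 * j) => 2 * i + j ≤ (a : ℕ))).card ≤ 1} : ℝ)
      ≤ (Nat.factorial i : ℝ) ^ 2 * (Nat.factorial j : ℝ) ^ 2 *
          (max (i + 1) (j + 1) : ℝ) ^ 11 /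
          (Nat.factorial ⌈(max i j : ℝ) / 7⌉₊ : ℝ) := by
  obtain ⟨u, hu⟩ := exists_card_segmentIndex_eq_max i j
  have hcount := Finpartition.card_mul_factorial_le_of_two_le_card (c := segmentIndex i j)
    (max i j) (fun v => by fin_cases v <;> simp [card_segmentIndex_eq]) u
    ⌈(max i j : ℝ) / 7⌉₊ fun m hm => natCeil_max_div_seven_le <| by
      rwa [hu, card_mem_two_le_card_finset_fin_four] at hm
  rw [card_two_le_card_finset_fin_four, prod_factorial_card_segmentIndex] at hcount
  rw [← Nat.card_congr (Equiv.subtypeEquivRight (isRainbow_segmentIndex_and_two_le_card_iff i j)),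
    le_div_iff₀ (by positivity)]
  have hmax : (max (i + 1) (j + 1) : ℝ) = ((max i j + 1 : ℕ) : ℝ) := by
    push_cast; exact max_add_add_right _ _ _
  rw [hmax]
  exact_mod_cast hcount.trans_eq (by ring)

/-- The number of partitions of `{1, …, 2i+2j}` each of whose blocks meets
each of the four index sets `J_1, J_2, J_3, J_4` in at most one element and has at least
two elements is at most `(i!)² (j!)² max{i+1, j+1}^{11} / ⌈max{i,j}/7⌉!`. -/
theorem stmt13 (i j : ℕ) (hi : 1 ≤ i) (hj : 1 ≤ j) :
    (Nat.card {σ : Finpartition (Finset.univ : Finset (Fin (2 * i + 2 * j))) //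
      ∀ A ∈ σ.parts, 2 ≤ A.card ∧
        (A ∩ Finset.univ.filter (fun a : Fin (2 * i + 2 * j) => (a : ℕ) < i)).card ≤ 1 ∧
        (A ∩ Finset.univ.filter
          (fun a : Fin (2 * i + 2 * j) => i ≤ (a : ℕ) ∧ (a : ℕ) < 2 * i)).card ≤ 1 ∧
        (A ∩ Finset.univ.filter
          (fun a : Fin (2 * i + 2 * j) => 2 * i ≤ (a : ℕ) ∧ (a : ℕ) < 2 * i + j)).card ≤ 1 ∧
        (A ∩ Finset.univ.filter
          (fun a : Fin (2 * i + 2 * j) => 2 * i + j ≤ (a : ℕ))).card ≤ 1} : ℝ)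
      ≤ (Nat.factorial i : ℝ) ^ 2 * (Nat.factorial j : ℝ) ^ 2 *
          (max (i + 1) (j + 1) : ℝ) ^ 11 /
          (Nat.factorial ⌈(max i j : ℝ) / 7⌉₊ : ℝ) :=
  stmt13_general i j
end

section
/- Let η be a Poisson particle process of convex grains with intensity measure Λ, let Z = ⋃_{K∈η} K, and let ψ be an additive functional on the convex ring. For the function f_{ψ,W}(μ) = ψ(Z(μ) ∩ W) with W a convex body, the iterated difference operator satisfies, for all n ≥ 1, convex bodies K_1, …, K_n, and counting measures μ: D^n_{K_1,…,K_n} f_{ψ,W}(μ) = (−1)^n (ψ(Z(μ) ∩ K_1 ∩ ⋯ ∩ K_n ∩ W) − ψ(K_1 ∩ ⋯ ∩ K_n ∩ W)). -/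
open MeasureTheory Set

/-- The union of the particles of a counting measure (modeled as a multiset of grains). -/
def unionOf {α : Type*} (μ : Multiset (Set α)) : Set α :=
  ⋃₀ {K | K ∈ μ}

/-- The iterated difference operator `D^n_{K_1,…,K_n} f` for functionals `f` of counting
measures (multisets) of grains, with `D_K f(μ) = f(μ + δ_K) − f(μ)` and
`D^n_{K_1,…,K_n} = D_{K_1} D^{n-1}_{K_2,…,K_n}`. -/
def iterDiffM {α : Type*} :
    (n : ℕ) → (Fin n → Set α) → (Multiset (Set α) → ℝ) → Multiset (Set α) → ℝ
  | 0, _, f, μ => f μ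
  | n + 1, Ks, f, μ =>
      iterDiffM n (fun i => Ks i.succ) f (Ks 0 ::ₘ μ) -
        iterDiffM n (fun i => Ks i.succ) f μ

/-- Membership in the convex ring: finite unions of compact convex sets. -/
def InConvexRing {d : ℕ} (A : Set (EuclideanSpace ℝ (Fin d))) : Prop :=
  ∃ s : Finset (Set (EuclideanSpace ℝ (Fin d))),
    (∀ K ∈ s, IsCompact K ∧ Convex ℝ K) ∧ A = ⋃₀ ↑s

lemma inConvexRing_of_body {d : ℕ} {K : Set (EuclideanSpace ℝ (Fin d))}
    (hK : IsCompact K ∧ Convex ℝ K) : InConvexRing K := by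
  refine ⟨{K}, ?_, by simp⟩
  intro L hL
  simp only [Finset.mem_singleton] at hL
  exact hL ▸ hK

lemma inConvexRing_inter {d : ℕ} {A C : Set (EuclideanSpace ℝ (Fin d))}
    (hA : InConvexRing A) (hC : IsCompact C ∧ Convex ℝ C) : InConvexRing (A ∩ C) := by
  classical
  obtain ⟨s, hs, rfl⟩ := hA
  refine ⟨s.image (· ∩ C), ?_, ?_⟩
  · intro K hK
    simp only [Finset.mem_image] at hK
    obtain ⟨L, hL, rfl⟩ := hK
    exact ⟨(hs L hL).1.inter_right hC.1.isClosed, (hs L hL).2.inter hC.2⟩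
  · ext x
    simp only [Finset.coe_image, mem_inter_iff, mem_sUnion, mem_image, Finset.mem_coe]
    constructor
    · rintro ⟨⟨t, ht, hxt⟩, hxC⟩
      exact ⟨t ∩ C, ⟨t, ht, rfl⟩, hxt, hxC⟩
    · rintro ⟨_, ⟨t, ht, rfl⟩, hxt, hxC⟩
      exact ⟨⟨t, ht, hxt⟩, hxC⟩

lemma inConvexRing_unionOf {d : ℕ} {μ : Multiset (Set (EuclideanSpace ℝ (Fin d)))}
    (hμ : ∀ K ∈ μ, IsCompact K ∧ Convex ℝ K) : InConvexRing (unionOf μ) := by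
  classical
  refine ⟨μ.toFinset, fun K hK => hμ K (Multiset.mem_toFinset.mp hK), ?_⟩
  unfold unionOf
  ext x
  simp [Multiset.mem_toFinset]

lemma unionOf_cons {α : Type*} (K : Set α) (μ : Multiset (Set α)) :
    unionOf (K ::ₘ μ) = K ∪ unionOf μ := by
  ext x
  simp only [unionOf, mem_sUnion, mem_setOf_eq, Multiset.mem_cons, mem_union]
  constructor
  · rintro ⟨L, (rfl | hL), hx⟩
    · exact Or.inl hx
    · exact Or.inr ⟨L, hL, hx⟩
  · rintro (hx | ⟨L, hL, hx⟩)
    · exact ⟨K, Or.inl rfl, hx⟩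
    · exact ⟨L, Or.inr hL, hx⟩

lemma key_diff {d : ℕ} (ψ : Set (EuclideanSpace ℝ (Fin d)) → ℝ)
    (hψadd : ∀ A B : Set (EuclideanSpace ℝ (Fin d)), InConvexRing A → InConvexRing B →
      ψ (A ∪ B) = ψ A + ψ B - ψ (A ∩ B))
    (Z K T : Set (EuclideanSpace ℝ (Fin d)))
    (hZ : InConvexRing Z) (hK : IsCompact K ∧ Convex ℝ K)
    (hT : IsCompact T ∧ Convex ℝ T) :
    ψ ((K ∪ Z) ∩ T) - ψ (Z ∩ T) = ψ (K ∩ T) - ψ (Z ∩ (K ∩ T)) := by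
  have h1 : (K ∪ Z) ∩ T = (K ∩ T) ∪ (Z ∩ T) := union_inter_distrib_right K Z T
  have h2 : (K ∩ T) ∩ (Z ∩ T) = Z ∩ (K ∩ T) := by ext x; simp only [mem_inter_iff]; tauto
  rw [h1, hψadd _ _ (inConvexRing_of_body ⟨hK.1.inter_right hT.1.isClosed, hK.2.inter hT.2⟩)
      (inConvexRing_inter hZ hT), h2]
  ring

/-- For an additive functional `ψ` on the convex ring and
`f_{ψ,W}(μ) = ψ(Z(μ) ∩ W)` with `Z(μ)` the union of the grains of `μ`, the iterated
difference operator satisfies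
`D^n_{K_1,…,K_n} f_{ψ,W}(μ) = (−1)^n (ψ(Z(μ) ∩ K_1 ∩ ⋯ ∩ K_n ∩ W) − ψ(K_1 ∩ ⋯ ∩ K_n ∩ W))`. -/
theorem stmt19 (d : ℕ)
    (ψ : Set (EuclideanSpace ℝ (Fin d)) → ℝ)
    (hψ0 : ψ ∅ = 0)
    (hψadd : ∀ A B : Set (EuclideanSpace ℝ (Fin d)), InConvexRing A → InConvexRing B →
      ψ (A ∪ B) = ψ A + ψ B - ψ (A ∩ B))
    (W : Set (EuclideanSpace ℝ (Fin d))) (hWcomp : IsCompact W) (hWconv : Convex ℝ W)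
    (n : ℕ) (hn : 1 ≤ n)
    (Ks : Fin n → Set (EuclideanSpace ℝ (Fin d)))
    (hKs : ∀ i, IsCompact (Ks i) ∧ Convex ℝ (Ks i))
    (μ : Multiset (Set (EuclideanSpace ℝ (Fin d))))
    (hμ : ∀ K ∈ μ, IsCompact K ∧ Convex ℝ K) :
    iterDiffM n Ks (fun ν => ψ (unionOf ν ∩ W)) μ
      = (-1 : ℝ) ^ n *
        (ψ (unionOf μ ∩ (⋂ i, Ks i) ∩ W) - ψ ((⋂ i, Ks i) ∩ W)) := by
  obtain ⟨m, rfl⟩ : ∃ m, n = m + 1 := ⟨n - 1, by omega⟩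
  clear hn
  induction m generalizing μ with
  | zero =>
    have hI : (⋂ i : Fin 1, Ks i) = Ks 0 := by
      ext x; simp [Fin.forall_fin_one]
    simp only [iterDiffM]
    rw [unionOf_cons, hI]
    have hk := key_diff ψ hψadd (unionOf μ) (Ks 0) W (inConvexRing_unionOf hμ) (hKs 0)
      ⟨hWcomp, hWconv⟩
    simp only [Set.inter_assoc] at hk ⊢
    linear_combination hk
  | succ m ih =>
    have hstep : iterDiffM (m + 1 + 1) Ks (fun ν => ψ (unionOf ν ∩ W)) μ
        = iterDiffM (m + 1) (fun i => Ks i.succ) (fun ν => ψ (unionOf ν ∩ W)) (Ks 0 ::ₘ μ)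
          - iterDiffM (m + 1) (fun i => Ks i.succ) (fun ν => ψ (unionOf ν ∩ W)) μ := rfl
    have hμ' : ∀ K ∈ Ks 0 ::ₘ μ, IsCompact K ∧ Convex ℝ K := by
      intro K hK
      rcases Multiset.mem_cons.mp hK with rfl | hK
      · exact hKs 0
      · exact hμ K hK
    have hI : (⋂ i : Fin (m + 1 + 1), Ks i) = Ks 0 ∩ ⋂ i : Fin (m + 1), Ks i.succ := by
      ext x; simp [Fin.forall_fin_succ]
    have hTc : IsCompact ((⋂ i : Fin (m + 1), Ks i.succ) ∩ W) :=
      hWcomp.inter_left (isClosed_iInter fun i : Fin (m+1) => (hKs i.succ).1.isClosed)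
    have hTv : Convex ℝ ((⋂ i : Fin (m + 1), Ks i.succ) ∩ W) :=
      (convex_iInter fun i : Fin (m+1) => (hKs i.succ).2).inter hWconv
    rw [hstep, ih (Ks 0 ::ₘ μ) hμ' (fun i : Fin (m+1) => Ks i.succ) (fun i => hKs i.succ),
      ih μ hμ (fun i : Fin (m+1) => Ks i.succ) (fun i => hKs i.succ), unionOf_cons, hI]
    have hk := key_diff ψ hψadd (unionOf μ) (Ks 0) ((⋂ i : Fin (m + 1), Ks i.succ) ∩ W)
      (inConvexRing_unionOf hμ) (hKs 0) ⟨hTc, hTv⟩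
    simp only [Set.inter_assoc] at hk ⊢
    rw [pow_succ]
    linear_combination ((-1 : ℝ) ^ (m + 1)) * hk
end
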